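/- For all real χ, ζ, ξ with 0.454 ≤ χ ≤ 0.45537, ζ ≥ 0, ξ ≥ 0, and 2χ + 2ζ + ξ < 1, the following strict inequality holds: 4·ln(2χ−3ζ−1/2) + 4·ln(2χ+ζ−1/2) − ln(1−2χ−2ζ) − ln(1−2χ+4ζ) + 2·ln(1−2χ−2ζ−ξ) + 2·ln(1−2χ+4ζ−ξ) − 10·ln(10χ−5ζ+ξ−7/2) < 0. (This expression is the partial derivative of ln h(χ,ζ,ξ) with respect to χ, so h is strictly decreasing in χ on the interior of the domain Ω.) -/
import Mathlib


open Real

/-- the partial derivative of `ln h` with respect to `χ` is negative on the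
interior of the domain `Ω`. -/
theorem partial_chi_log_h_neg (χ ζ ξ : ℝ)
    (hχ1 : 0.454 ≤ χ) (hχ2 : χ ≤ 0.45537) (hζ : 0 ≤ ζ) (hξ : 0 ≤ ξ)
    (hsum : 2 * χ + 2 * ζ + ξ < 1) :
    4 * Real.log (2 * χ - 3 * ζ - 1 / 2) + 4 * Real.log (2 * χ + ζ - 1 / 2)
      - Real.log (1 - 2 * χ - 2 * ζ) - Real.log (1 - 2 * χ + 4 * ζ)
      + 2 * Real.log (1 - 2 * χ - 2 * ζ - ξ) + 2 * Real.log (1 - 2 * χ + 4 * ζ - ξ)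
      - 10 * Real.log (10 * χ - 5 * ζ + ξ - 7 / 2) < 0 := by
  have hζ' : ζ < 0.046 := by nlinarith
  have hξ' : ξ < 0.092 := by nlinarith
  have ha : (0:ℝ) < 2 * χ - 3 * ζ - 1 / 2 := by nlinarith
  have hb : (0:ℝ) < 2 * χ + ζ - 1 / 2 := by nlinarith
  have huξ : (0:ℝ) < 1 - 2 * χ - 2 * ζ - ξ := by nlinarith
  have hvξ : (0:ℝ) < 1 - 2 * χ + 4 * ζ - ξ := by nlinarith
  have hu : (0:ℝ) < 1 - 2 * χ - 2 * ζ := by nlinarith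
  have hv : (0:ℝ) < 1 - 2 * χ + 4 * ζ := by nlinarith
  have h1 : Real.log (2 * χ - 3 * ζ - 1 / 2) ≤ Real.log 0.411 :=
    Real.log_le_log (by nlinarith) (by nlinarith)
  have h2 : Real.log (2 * χ + ζ - 1 / 2) ≤ Real.log 0.457 :=
    Real.log_le_log (by nlinarith) (by nlinarith)
  have h3 : Real.log (1 - 2 * χ - 2 * ζ) ≤ Real.log 0.092 :=
    Real.log_le_log hu (by nlinarith)
  have h4 : Real.log (1 - 2 * χ + 4 * ζ) ≤ Real.log 0.276 :=
    Real.log_le_log hv (by nlinarith)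
  have h5 : Real.log (1 - 2 * χ - 2 * ζ - ξ) ≤ Real.log (1 - 2 * χ - 2 * ζ) :=
    Real.log_le_log huξ (by nlinarith)
  have h6 : Real.log (1 - 2 * χ + 4 * ζ - ξ) ≤ Real.log (1 - 2 * χ + 4 * ζ) :=
    Real.log_le_log hvξ (by nlinarith)
  have h7 : Real.log 0.81 ≤ Real.log (10 * χ - 5 * ζ + ξ - 7 / 2) :=
    Real.log_le_log (by norm_num) (by nlinarith)
  have key : Real.log ((0.411:ℝ) ^ 4 * 0.457 ^ 4 * 0.092 * 0.276) <
      Real.log ((0.81:ℝ) ^ 10) :=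
    Real.log_lt_log (by norm_num) (by norm_num)
  rw [Real.log_mul (by norm_num) (by norm_num), Real.log_mul (by norm_num) (by norm_num),
    Real.log_mul (by norm_num) (by norm_num), Real.log_pow, Real.log_pow, Real.log_pow] at key
  push_cast at key
  linarith
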